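/- arXiv:2412.12631 — 3 statements merged into one kernel-verified Lean document; each statement's English description precedes it below -/
import Mathlib

section
/- Let $A$ be a symmetric traceless $n \times n$ real matrix ($n \ge 2$) with entries $A_{ij}$. Then $\sum_{j=1}^n A_{1j}^2 \le \frac{n-1}{n} \sum_{i,j=1}^n A_{ij}^2$. -/
open Finset

/-- refined Kato inequality, algebraic form: for a symmetric traceless
real `n × n` matrix `A` (`n ≥ 2`), `∑_j A_{1j}² ≤ ((n-1)/n) ∑_{i,j} A_{ij}²`. -/
theorem refined_kato_inequality
    (n : ℕ) (hn : 2 ≤ n)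
    (A : Matrix (Fin n) (Fin n) ℝ) (hsym : A.IsSymm) (htr : A.trace = 0) :
    ∑ j : Fin n, (A ⟨0, by omega⟩ j) ^ 2 ≤
      (((n : ℝ) - 1) / n) * ∑ i : Fin n, ∑ j : Fin n, (A i j) ^ 2 := by
  set i0 : Fin n := ⟨0, by omega⟩ with hi0
  have hnR : (2:ℝ) ≤ (n:ℝ) := by exact_mod_cast hn
  set d : ℝ := A i0 i0 ^ 2 with hd
  set S : ℝ := ∑ i ∈ univ.erase i0, A i0 i ^ 2 with hS
  set D : ℝ := ∑ i ∈ univ.erase i0, A i i ^ 2 with hD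
  set T : ℝ := ∑ i : Fin n, ∑ j : Fin n, (A i j) ^ 2 with hT
  have hrow : ∑ j : Fin n, A i0 j ^ 2 = d + S := by
    rw [hS, hd]
    exact (Finset.add_sum_erase univ (fun j => A i0 j ^ 2) (mem_univ i0)).symm
  have htrace : ∑ i ∈ univ.erase i0, A i i = - A i0 i0 := by
    have h0 : A i0 i0 + ∑ i ∈ univ.erase i0, A i i = 0 := by
      rw [Finset.add_sum_erase univ (fun i => A i i) (mem_univ i0)]
      simpa [Matrix.trace, Matrix.diag] using htr
    linarith
  have hcard : ((univ.erase i0).card : ℝ) = (n:ℝ) - 1 := by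
    rw [Finset.card_erase_of_mem (mem_univ i0), Finset.card_univ, Fintype.card_fin]
    have : 1 ≤ n := by omega
    push_cast [this]
    ring
  have hCS : d ≤ ((n:ℝ) - 1) * D := by
    have h := sq_sum_le_card_mul_sum_sq (s := univ.erase i0) (f := fun i => A i i)
    rw [htrace] at h
    calc d = (- A i0 i0) ^ 2 := by rw [hd]; ring
    _ ≤ ((univ.erase i0).card : ℝ) * D := h
    _ = ((n:ℝ) - 1) * D := by rw [hcard]
  have hSnn : 0 ≤ S := Finset.sum_nonneg fun i _ => sq_nonneg _
  have hDnn : 0 ≤ D := Finset.sum_nonneg fun i _ => sq_nonneg _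
  have hTlb : d + S + S + D ≤ T := by
    have hsplit : T = (d + S) + ∑ i ∈ univ.erase i0, ∑ j : Fin n, A i j ^ 2 := by
      rw [hT, ← Finset.add_sum_erase univ (fun i => ∑ j : Fin n, A i j ^ 2) (mem_univ i0)]
      rw [hrow]
    have hterm : ∀ i ∈ univ.erase i0,
        A i0 i ^ 2 + A i i ^ 2 ≤ ∑ j : Fin n, A i j ^ 2 := by
      intro i hi
      have hne : i ≠ i0 := (Finset.mem_erase.mp hi).1
      have hsub : ({i0, i} : Finset (Fin n)) ⊆ univ := Finset.subset_univ _
      have := Finset.sum_le_sum_of_subset_of_nonneg hsub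
        (fun j _ _ => sq_nonneg (A i j))
      rw [Finset.sum_pair (Ne.symm hne)] at this
      calc A i0 i ^ 2 + A i i ^ 2 = A i i0 ^ 2 + A i i ^ 2 := by
            rw [hsym.apply i0 i]
      _ ≤ _ := this
    have hsum : S + D ≤ ∑ i ∈ univ.erase i0, ∑ j : Fin n, A i j ^ 2 := by
      rw [hS, hD, ← Finset.sum_add_distrib]
      exact Finset.sum_le_sum hterm
    rw [hsplit]; linarith
  rw [hrow, div_mul_eq_mul_div, le_div_iff₀ (by linarith : (0:ℝ) < (n:ℝ))]
  nlinarith [mul_le_mul_of_nonneg_left hTlb (by linarith : (0:ℝ) ≤ (n:ℝ) - 1)]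
end

section
/- Let $A$ be a symmetric traceless $n \times n$ real matrix, $n \ge 3$, with $A \ne 0$. If equality holds in the refined Kato inequality, i.e. $\sum_{j=1}^n A_{1j}^2 = \frac{n-1}{n}|A|^2$, then $A$ has exactly two eigenvalues $\lambda$ and $\mu = -\lambda/(n-1)$, with multiplicities $1$ and $n-1$ respectively, and the first standard basis vector $e_1$ is an eigenvector for $\lambda$. -/
/-!
Put `a = A₁₁`, `c = -a / (n - 1)` and `D = diag(a, c, …, c)`. As `tr A = 0`, expanding
`|A - D|²` gives `(n - 1) |A - D|² = (n - 1) |A|² - n a²`. The first row and the first column of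
`A - D` both have squared norm `V = ∑_{j ≠ 1} A₁ⱼ²`, so `|A - D|² ≥ 2 V`, and therefore
`(n - 1) |A|² - n ∑ⱼ A₁ⱼ² = (n - 1) |A - D|² - n V ≥ (n - 2) V ≥ 0`.
Equality forces `V = 0` and then `A = D`, whose eigenvalues are read off the diagonal.
-/

open Finset Polynomial Matrix

section

variable {ι : Type*} [Fintype ι]

lemma eq_zero_of_sum_sq_eq_zero {M : Matrix ι ι ℝ} (h : ∑ i, ∑ j, M i j ^ 2 = 0) :
    M = 0 := by
  ext i j
  have hrow : ∑ j, M i j ^ 2 = 0 :=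
    (sum_eq_zero_iff_of_nonneg fun i _ => sum_nonneg fun j _ => sq_nonneg (M i j)).1 h i
      (mem_univ i)
  exact pow_eq_zero_iff two_ne_zero |>.1 <|
    (sum_eq_zero_iff_of_nonneg fun j _ => sq_nonneg (M i j)).1 hrow j (mem_univ j)

variable [DecidableEq ι]

@[to_additive]
lemma prod_apply_update_const {α M : Type*} [CommMonoid M] (k : ι) (g : ι → α → M)
    (a c : α) :
    ∏ i, g i (Function.update (fun _ => c) k a i) = g k a * ∏ i ∈ univ.erase k, g i c := by
  rw [← mul_prod_erase univ _ (mem_univ k), Function.update_self]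
  exact congrArg _ (prod_congr rfl fun i hi => by rw [Function.update_of_ne (ne_of_mem_erase hi)])

lemma sum_sq_sub_diagonal (A : Matrix ι ι ℝ) (d : ι → ℝ) :
    ∑ i, ∑ j, (A - diagonal d) i j ^ 2 =
      ∑ i, ∑ j, A i j ^ 2 - 2 * ∑ i, A i i * d i + ∑ i, d i ^ 2 := by
  simp [diagonal_apply, sub_sq, sum_add_distrib, sum_sub_distrib, mul_sum, mul_assoc]

lemma sum_sq_row_add_sum_sq_row_erase_le {M : Matrix ι ι ℝ} (hM : M.IsSymm) (k : ι) :
    ∑ j, M k j ^ 2 + ∑ j ∈ univ.erase k, M k j ^ 2 ≤ ∑ i, ∑ j, M i j ^ 2 := by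
  rw [← add_sum_erase univ (fun i => ∑ j, M i j ^ 2) (mem_univ k)]
  gcongr with i
  calc M k i ^ 2 = M i k ^ 2 := by rw [hM.apply k i]
    _ ≤ ∑ j, M i j ^ 2 := single_le_sum (fun j _ => sq_nonneg (M i j)) (mem_univ k)

/-- The entries off `k` are chosen so that the trace vanishes. -/
noncomputable def katoExtremalDiagonal (k : ι) (a : ℝ) : ι → ℝ :=
  Function.update (fun _ => -a / (Fintype.card ι - 1)) k a

lemma sum_sq_sub_katoExtremalDiagonal {A : Matrix ι ι ℝ} (hA : A.trace = 0) (k : ι)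
    (hcard : 1 < Fintype.card ι) :
    ((Fintype.card ι : ℝ) - 1) *
        ∑ i, ∑ j, (A - diagonal (katoExtremalDiagonal k (A k k))) i j ^ 2 =
      ((Fintype.card ι : ℝ) - 1) * ∑ i, ∑ j, A i j ^ 2 - Fintype.card ι * A k k ^ 2 := by
  have hm : (Fintype.card ι : ℝ) - 1 ≠ 0 := sub_ne_zero.2 (by exact_mod_cast hcard.ne')
  have htr : ∑ i ∈ univ.erase k, A i i = -A k k := by
    have := add_sum_erase univ (fun i => A i i) (mem_univ k)
    rw [show ∑ i, A i i = A.trace from rfl, hA] at this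
    linarith
  have hcross :=
    sum_apply_update_const k (fun i x => A i i * x) (A k k) (-A k k / (Fintype.card ι - 1))
  have hsq := sum_apply_update_const k (fun _ x => x ^ 2) (A k k) (-A k k / (Fintype.card ι - 1))
  simp only [← sum_mul, htr, sum_const, card_erase_of_mem (mem_univ k), card_univ, nsmul_eq_mul,
    Nat.cast_sub hcard.le, Nat.cast_one] at hcross hsq
  rw [sum_sq_sub_diagonal, katoExtremalDiagonal, hcross, hsq]
  field_simp
  ring

theorem Matrix.IsSymm.eq_diagonal_of_refined_kato_eq {A : Matrix ι ι ℝ} (hsym : A.IsSymm)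
    (htr : A.trace = 0) (k : ι) (hcard : 2 < Fintype.card ι)
    (heq : (Fintype.card ι : ℝ) * ∑ j, A k j ^ 2 =
      (Fintype.card ι - 1) * ∑ i, ∑ j, A i j ^ 2) :
    A = diagonal (katoExtremalDiagonal k (A k k)) := by
  set M := A - diagonal (katoExtremalDiagonal k (A k k))
  set V := ∑ j ∈ univ.erase k, A k j ^ 2
  have hm : (2 : ℝ) < Fintype.card ι := by exact_mod_cast hcard
  have hMV : ∑ j ∈ univ.erase k, M k j ^ 2 = V := sum_congr rfl fun j hj => by
    simp [M, diagonal_apply_ne _ (ne_of_mem_erase hj).symm]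
  have hMkk : M k k = 0 := by simp [M, katoExtremalDiagonal]
  have hbound : 2 * V ≤ ∑ i, ∑ j, M i j ^ 2 := by
    have hrowcol :=
      sum_sq_row_add_sum_sq_row_erase_le (M := M) (hsym.sub (isSymm_diagonal _)) k
    rw [← add_sum_erase _ _ (mem_univ k), hMkk, hMV] at hrowcol
    linarith
  have hRV : ∑ j, A k j ^ 2 = A k k ^ 2 + V := (add_sum_erase _ _ (mem_univ k)).symm
  have hident : ((Fintype.card ι : ℝ) - 1) * ∑ i, ∑ j, M i j ^ 2 = Fintype.card ι * V := by
    rw [sum_sq_sub_katoExtremalDiagonal htr k (by omega), ← heq, hRV]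
    ring
  have hV : V = 0 := by
    have hVnn : 0 ≤ V := sum_nonneg fun j _ => sq_nonneg _
    nlinarith
  have hM : ∑ i, ∑ j, M i j ^ 2 = 0 := by
    rw [hV, mul_zero, mul_eq_zero] at hident
    exact hident.resolve_left (by linarith)
  exact sub_eq_zero.1 (eq_zero_of_sum_sq_eq_zero hM)

lemma charpoly_diagonal_katoExtremalDiagonal (k : ι) (a : ℝ) :
    (diagonal (katoExtremalDiagonal k a)).charpoly =
      (X - C a) * (X - C (-a / (Fintype.card ι - 1))) ^ (Fintype.card ι - 1) := by
  rw [charpoly_diagonal, katoExtremalDiagonal,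
    prod_apply_update_const k (fun _ x => X - C x), prod_const, card_erase_of_mem (mem_univ k),
    card_univ]

end

/-- equality case in the refined Kato inequality: if `A ≠ 0` is a
symmetric traceless real `n × n` matrix (`n ≥ 3`) with
`∑_j A_{1j}² = ((n-1)/n) |A|²`, then `e₁` is an eigenvector of `A` for some
eigenvalue `λ`, and `A` has exactly the two eigenvalues `λ` and `μ = -λ/(n-1)`,
with multiplicities `1` and `n-1` respectively (expressed via the characteristic
polynomial `charpoly A = (X - λ)·(X - μ)^{n-1}` together with `λ ≠ μ`). -/
theorem refined_kato_equality_case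
    (n : ℕ) (hn : 3 ≤ n)
    (A : Matrix (Fin n) (Fin n) ℝ) (hsym : A.IsSymm) (htr : A.trace = 0)
    (hA : A ≠ 0)
    (heq : ∑ j : Fin n, (A ⟨0, by omega⟩ j) ^ 2 =
      (((n : ℝ) - 1) / n) * ∑ i : Fin n, ∑ j : Fin n, (A i j) ^ 2) :
    ∃ lam : ℝ,
      A.mulVec (Pi.single (⟨0, by omega⟩ : Fin n) (1 : ℝ)) =
        lam • (Pi.single (⟨0, by omega⟩ : Fin n) (1 : ℝ) : Fin n → ℝ) ∧
      lam ≠ -lam / ((n : ℝ) - 1) ∧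
      A.charpoly = (X - C lam) * (X - C (-lam / ((n : ℝ) - 1))) ^ (n - 1) := by
  set k : Fin n := ⟨0, by omega⟩
  set a := A k k
  have hn' : (3 : ℝ) ≤ n := by exact_mod_cast hn
  have hA_eq : A = diagonal (katoExtremalDiagonal k a) := by
    refine hsym.eq_diagonal_of_refined_kato_eq htr k (by rw [Fintype.card_fin]; omega) ?_
    rw [Fintype.card_fin, heq]
    field_simp
  have ha : a ≠ 0 := by
    intro h0
    refine hA (hA_eq.trans ?_)
    simp [h0, katoExtremalDiagonal]
  refine ⟨a, ?_, ?_, ?_⟩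
  · rw [hA_eq, diagonal_mulVec_single]
    simp [katoExtremalDiagonal, ← Pi.single_smul]
  · rw [ne_eq, eq_div_iff (by linarith)]
    intro h
    exact ha (by nlinarith)
  · rw [hA_eq, charpoly_diagonal_katoExtremalDiagonal, Fintype.card_fin]
end

section
/- Let $R$ be an algebraic curvature tensor on an inner product space, and let $e_0, e_1, e_\alpha, e_\beta$ be orthonormal vectors. Suppose $R(X,Y,X,Y) \ge 0$ for all vectors $X, Y$ (non-negative sectional-type curvature), and suppose $R_{1\alpha1\alpha} = R_{1010} = R_{\alpha0\alpha0} = R_{\beta0\beta0} = 0$. Then also $R_{0\alpha1\alpha} = R_{101\alpha} = R_{0\alpha10} = R_{\beta\alpha\beta0} = R_{\beta0\alpha0} = 0$. -/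
/-!
If `R(a,b,a,b) = 0`, then `t ↦ R(a + t v, b, a + t v, b) = 2t R(v,b,a,b) + t² R(v,b,v,b)` is a
non-negative quadratic without constant term, so its linear coefficient vanishes. Each of the five
components is, up to the Riemann symmetries, such a linear coefficient at one of the four given zeros.
-/

open Matrix

namespace MultilinearMap

section CommRing

variable {𝕜 V : Type*} [CommRing 𝕜] [AddCommGroup V] [Module 𝕜 V]
  (R : MultilinearMap 𝕜 (fun _ : Fin 4 => V) 𝕜)

theorem map_vecCons_add_smul (a v : V) (t : 𝕜) (m : Fin 3 → V) :
    R (vecCons (a + t • v) m) = R (vecCons a m) + t * R (vecCons v m) := by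
  have h := R.cons_add m a (t • v)
  rw [R.cons_smul, smul_eq_mul] at h
  exact h

theorem map_add_smul_sectional (hpair : ∀ x y z w : V, R ![x, y, z, w] = R ![z, w, x, y])
    (a b v : V) (t : 𝕜) :
    R ![a + t • v, b, a + t • v, b] =
      R ![v, b, v, b] * (t * t) + 2 * R ![v, b, a, b] * t + R ![a, b, a, b] := by
  have hslot2 : ∀ x : V, R ![x, b, a + t • v, b] = R ![x, b, a, b] + t * R ![x, b, v, b] := by
    intro x
    rw [hpair, map_vecCons_add_smul, hpair a, hpair v]
  rw [map_vecCons_add_smul, hslot2, hslot2, hpair a b v b]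
  ring

theorem map_swap_pairs (hanti1 : ∀ x y z w : V, R ![x, y, z, w] = -R ![y, x, z, w])
    (hanti2 : ∀ x y z w : V, R ![x, y, z, w] = -R ![x, y, w, z]) (x y z w : V) :
    R ![y, x, w, z] = R ![x, y, z, w] := by
  rw [hanti1, hanti2, neg_neg]

end CommRing

section LinearOrderedField

variable {𝕜 V : Type*} [Field 𝕜] [LinearOrder 𝕜] [IsStrictOrderedRing 𝕜] [AddCommGroup V]
  [Module 𝕜 V] (R : MultilinearMap 𝕜 (fun _ : Fin 4 => V) 𝕜)

theorem map_eq_zero_of_sectional_eq_zero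
    (hpair : ∀ x y z w : V, R ![x, y, z, w] = R ![z, w, x, y])
    (hnonneg : ∀ x y : V, 0 ≤ R ![x, y, x, y]) {a b : V} (hab : R ![a, b, a, b] = 0) (v : V) :
    R ![v, b, a, b] = 0 := by
  have hdiscrim : discrim (R ![v, b, v, b]) (2 * R ![v, b, a, b]) 0 ≤ 0 :=
    discrim_le_zero fun t => by
      simpa only [map_add_smul_sectional R hpair, hab] using hnonneg (a + t • v) b
  rw [discrim] at hdiscrim
  nlinarith

theorem map_eq_zero_of_sectional_eq_zero'
    (hanti1 : ∀ x y z w : V, R ![x, y, z, w] = -R ![y, x, z, w])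
    (hanti2 : ∀ x y z w : V, R ![x, y, z, w] = -R ![x, y, w, z])
    (hpair : ∀ x y z w : V, R ![x, y, z, w] = R ![z, w, x, y])
    (hnonneg : ∀ x y : V, 0 ≤ R ![x, y, x, y]) {a b : V} (hab : R ![a, b, a, b] = 0) (v : V) :
    R ![a, v, a, b] = 0 := by
  rw [← map_swap_pairs R hanti1 hanti2] at hab ⊢
  exact map_eq_zero_of_sectional_eq_zero R hpair hnonneg hab v

end LinearOrderedField

end MultilinearMap

open MultilinearMap in
theorem curvature_vanishing_from_nonnegativity_general
    {V : Type*} [NormedAddCommGroup V] [InnerProductSpace ℝ V]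
    (R : MultilinearMap ℝ (fun _ : Fin 4 => V) ℝ)
    -- Riemann symmetries
    (hanti1 : ∀ x y z w : V, R ![x, y, z, w] = -R ![y, x, z, w])
    (hanti2 : ∀ x y z w : V, R ![x, y, z, w] = -R ![x, y, w, z])
    (hpair : ∀ x y z w : V, R ![x, y, z, w] = R ![z, w, x, y])
    -- non-negative sectional-type curvature
    (hnonneg : ∀ x y : V, 0 ≤ R ![x, y, x, y])
    (e₀ e₁ eα eβ : V)
    -- vanishing hypotheses
    (hv1 : R ![e₁, eα, e₁, eα] = 0)
    (hv2 : R ![e₁, e₀, e₁, e₀] = 0)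
    (hv3 : R ![eα, e₀, eα, e₀] = 0)
    (hv4 : R ![eβ, e₀, eβ, e₀] = 0) :
    R ![e₀, eα, e₁, eα] = 0 ∧
    R ![e₁, e₀, e₁, eα] = 0 ∧
    R ![e₀, eα, e₁, e₀] = 0 ∧
    R ![eβ, eα, eβ, e₀] = 0 ∧
    R ![eβ, e₀, eα, e₀] = 0 := by
  refine ⟨map_eq_zero_of_sectional_eq_zero R hpair hnonneg hv1 e₀, ?_, ?_,
    map_eq_zero_of_sectional_eq_zero' R hanti1 hanti2 hpair hnonneg hv4 eα,
    map_eq_zero_of_sectional_eq_zero R hpair hnonneg hv3 eβ⟩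
  · rw [hpair]
    exact map_eq_zero_of_sectional_eq_zero' R hanti1 hanti2 hpair hnonneg hv2 eα
  · rw [hanti1, map_eq_zero_of_sectional_eq_zero R hpair hnonneg hv2 eα, neg_zero]

/-- let `R` be an algebraic curvature tensor (a 4-multilinear form
with the Riemann symmetries and first Bianchi identity) on a real inner product
space, with non-negative biquadratic form `R(X,Y,X,Y) ≥ 0`, and let
`e₀, e₁, e_α, e_β` be orthonormal vectors.  If
`R_{1α1α} = R_{1010} = R_{α0α0} = R_{β0β0} = 0`, then also
`R_{0α1α} = R_{101α} = R_{0α10} = R_{βαβ0} = R_{β0α0} = 0`. -/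
theorem curvature_vanishing_from_nonnegativity
    {V : Type*} [NormedAddCommGroup V] [InnerProductSpace ℝ V]
    (R : MultilinearMap ℝ (fun _ : Fin 4 => V) ℝ)
    -- Riemann symmetries
    (hanti1 : ∀ x y z w : V, R ![x, y, z, w] = -R ![y, x, z, w])
    (hanti2 : ∀ x y z w : V, R ![x, y, z, w] = -R ![x, y, w, z])
    (hpair : ∀ x y z w : V, R ![x, y, z, w] = R ![z, w, x, y])
    (hbianchi : ∀ x y z w : V,
      R ![x, y, z, w] + R ![y, z, x, w] + R ![z, x, y, w] = 0)
    -- non-negative sectional-type curvature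
    (hnonneg : ∀ x y : V, 0 ≤ R ![x, y, x, y])
    (e₀ e₁ eα eβ : V)
    -- orthonormality
    (h00 : (inner ℝ e₀ e₀ : ℝ) = 1) (h11 : (inner ℝ e₁ e₁ : ℝ) = 1)
    (hαα : (inner ℝ eα eα : ℝ) = 1) (hββ : (inner ℝ eβ eβ : ℝ) = 1)
    (h01 : (inner ℝ e₀ e₁ : ℝ) = 0) (h0α : (inner ℝ e₀ eα : ℝ) = 0) (h0β : (inner ℝ e₀ eβ : ℝ) = 0)
    (h1α : (inner ℝ e₁ eα : ℝ) = 0) (h1β : (inner ℝ e₁ eβ : ℝ) = 0) (hαβ : (inner ℝ eα eβ : ℝ) = 0)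
    -- vanishing hypotheses
    (hv1 : R ![e₁, eα, e₁, eα] = 0)
    (hv2 : R ![e₁, e₀, e₁, e₀] = 0)
    (hv3 : R ![eα, e₀, eα, e₀] = 0)
    (hv4 : R ![eβ, e₀, eβ, e₀] = 0) :
    R ![e₀, eα, e₁, eα] = 0 ∧
    R ![e₁, e₀, e₁, eα] = 0 ∧
    R ![e₀, eα, e₁, e₀] = 0 ∧
    R ![eβ, eα, eβ, e₀] = 0 ∧
    R ![eβ, e₀, eα, e₀] = 0 :=
  curvature_vanishing_from_nonnegativity_general R hanti1 hanti2 hpair hnonneg e₀ e₁ eα eβ hv1 hv2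
    hv3 hv4
end
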